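/- arXiv:2210.13437 — 3 statements merged into one kernel-verified Lean document; each statement's English description precedes it below -/
import Mathlib

section
/- For integers m ≥ 1 and d > 2m, the equation (m/(m+1−x))^{d−m} = x has exactly one solution x in the open interval (0, 2m/d). -/
/-- For integers `m ≥ 1` and `d > 2m`, the equation `(m/(m+1−x))^(d−m) = x` has exactly one
solution `x` in the open interval `(0, 2m/d)`. -/
theorem unique_root_in_Ioo (m d : ℕ) (hm : 1 ≤ m) (hd : 2 * m < d) :
    ∃! x : ℝ, x ∈ Set.Ioo (0 : ℝ) (2 * m / d) ∧
      ((m : ℝ) / ((m : ℝ) + 1 - x)) ^ (d - m) = x := by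
  have hmd : m ≤ d := by omega
  set n : ℕ := d - m with hn
  set M : ℝ := (m : ℝ) with hM
  set D : ℝ := (d : ℝ) with hD
  have hM1 : (1:ℝ) ≤ M := by rw [hM]; exact_mod_cast hm
  have hM0 : (0:ℝ) < M := by linarith
  have hD2M : 2*M < D := by rw [hM, hD]; exact_mod_cast hd
  have hD0 : (0:ℝ) < D := by linarith
  have hnR : (n:ℝ) = D - M := by
    rw [hn, hM, hD]; push_cast [hmd]; ring
  have hbdef : 2 * M / D = 2*M/D := rfl
  set b : ℝ := 2*M/D with hb
  have hb0 : 0 < b := by positivity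
  have hb1 : b < 1 := by rw [hb, div_lt_one hD0]; linarith
  have hden : ∀ x : ℝ, x ≤ b → 0 < M + 1 - x := fun x hx => by linarith
  -- key inequality : value at b is less than b
  have hkey : (M / (M + 1 - b)) ^ n < b := by
    set ε : ℝ := (D - 2*M)/(M*D) with hε
    have hε0 : 0 < ε := div_pos (by linarith) (by positivity)
    have hbase : M / (M + 1 - b) = (1+ε)⁻¹ := by
      have h1 : M + 1 - b = (M*D + D - 2*M)/D := by
        rw [hb]; field_simp
      have h2 : (1:ℝ)+ε = (M*D + D - 2*M)/(M*D) := by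
        rw [hε]; field_simp; ring
      rw [h1, h2, div_div_eq_mul_div, inv_div]
    have hbern : 1 + (n:ℝ)*ε ≤ (1+ε)^n := one_add_mul_le_pow (by linarith) n
    have h2 : D/(2*M) < 1 + (n:ℝ)*ε := by
      rw [hnR, hε]
      have hdiff : 1 + (D-M)*((D - 2*M)/(M*D)) - D/(2*M) = (D-2*M)^2/(2*M*D) := by
        field_simp; ring
      have hpos : (0:ℝ) < (D-2*M)^2/(2*M*D) :=
        div_pos (pow_pos (by linarith) 2) (by positivity)
      linarith
    have hpow_gt : D/(2*M) < (1+ε)^n := lt_of_lt_of_le h2 hbern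
    have hinv : ((1+ε)^n)⁻¹ < (D/(2*M))⁻¹ :=
      (inv_lt_inv₀ (lt_trans (by positivity) hpow_gt) (by positivity)).mpr hpow_gt
    rw [hbase, inv_pow]
    calc ((1+ε)^n)⁻¹ < (D/(2*M))⁻¹ := hinv
      _ = 2*M/D := by rw [inv_div]
      _ = b := hb.symm
  -- continuity of g x = f x - x on [0, b]
  set g : ℝ → ℝ := fun x => (M / (M + 1 - x)) ^ n - x with hg
  have hgcont : ContinuousOn g (Set.Icc 0 b) := by
    apply ContinuousOn.sub _ continuousOn_id
    apply ContinuousOn.pow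
    apply ContinuousOn.div continuousOn_const (by fun_prop)
    intro x hx
    exact ne_of_gt (hden x hx.2)
  have hg0 : 0 < g 0 := by
    have : (0:ℝ) < M / (M + 1 - 0) := div_pos hM0 (by linarith)
    have := pow_pos this n
    simpa [hg] using this
  have hgb : g b < 0 := by simpa [hg] using sub_neg.mpr hkey
  -- existence via IVT
  obtain ⟨x, hx, hgx⟩ := intermediate_value_Ioo' (le_of_lt hb0) hgcont ⟨hgb, hg0⟩
  have hfx : (M / (M + 1 - x)) ^ n = x := by
    have h := hgx
    simp only [hg, sub_eq_zero] at h
    exact h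
  -- uniqueness via convexity
  have huniq : ∀ y z : ℝ, y ∈ Set.Ioo (0:ℝ) b → z ∈ Set.Ioo (0:ℝ) b →
      (M / (M + 1 - y)) ^ n = y → (M / (M + 1 - z)) ^ n = z → ¬ (y < z) := by
    intro y z hy hz hfy hfz hlt
    have hzb : z < b := hz.2
    have hby : 0 < b - y := by linarith
    set t : ℝ := (b - z)/(b - y) with ht
    have ht0 : 0 < t := div_pos (by linarith) hby
    have ht1 : t < 1 := (div_lt_one hby).2 (by linarith)
    have hz_eq : z = t*y + (1-t)*b := by
      rw [ht]; field_simp; ring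
    have hu : 0 < M + 1 - y := hden y (le_of_lt hy.2)
    have hv : 0 < M + 1 - b := hden b le_rfl
    have hw : 0 < M + 1 - z := hden z (le_of_lt hzb)
    have hmid : M + 1 - z = t*(M+1-y) + (1-t)*(M+1-b) := by
      rw [hz_eq]; ring
    -- convexity of w ↦ w ^ (-(n:ℤ)) on Ioi 0
    have hconv := (convexOn_zpow (𝕜 := ℝ) (-(n:ℤ))).2
      (Set.mem_Ioi.2 hu) (Set.mem_Ioi.2 hv) ht0.le (by linarith : (0:ℝ) ≤ 1 - t)
      (by ring)
    simp only [smul_eq_mul] at hconv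
    rw [← hmid] at hconv
    have hzp : ∀ w : ℝ, 0 < w → w ^ (-(n:ℤ)) = (w^n)⁻¹ := by
      intro w hwpos
      rw [zpow_neg, zpow_natCast]
    rw [hzp _ hw, hzp _ hu, hzp _ hv] at hconv
    have hMn : (0:ℝ) ≤ M^n := by positivity
    have hmul := mul_le_mul_of_nonneg_left hconv hMn
    have e : ∀ w : ℝ, 0 < w → M^n * (w^n)⁻¹ = (M/w)^n := by
      intro w hwpos
      rw [div_pow, div_eq_mul_inv]
    have chain : (M/(M+1-z))^n ≤ t * (M/(M+1-y))^n + (1-t) * (M/(M+1-b))^n := by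
      rw [← e _ hw, ← e _ hu, ← e _ hv]
      calc M^n * ((M+1-z)^n)⁻¹ ≤ M^n * (t * ((M+1-y)^n)⁻¹ + (1-t) * ((M+1-b)^n)⁻¹) := hmul
        _ = t * (M^n * ((M+1-y)^n)⁻¹) + (1-t) * (M^n * ((M+1-b)^n)⁻¹) := by ring
    rw [hfz, hfy] at chain
    have : z < t*y + (1-t)*b := by
      have h1 : (1-t) * (M/(M+1-b))^n < (1-t) * b :=
        mul_lt_mul_of_pos_left hkey (by linarith)
      linarith
    rw [← hz_eq] at this
    exact lt_irrefl z this
  refine ⟨x, ⟨hx, hfx⟩, ?_⟩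
  rintro w ⟨hw_mem, hw_eq⟩
  rcases lt_trichotomy w x with h | h | h
  · exact absurd h (huniq w x hw_mem hx hw_eq hfx)
  · exact h
  · exact absurd h (huniq x w hx hw_mem hfx hw_eq)
end

section
/- Fix integers m ≥ 1 and d > 2m. The vector (ρ_m, …, ρ_d) is the unique solution of the system of equations 1 − (m/(1−x_d))·x_m = x_m; (m/(1−x_d))·(x_{k−1} − x_k) = x_k for k = m+1, …, d−1; (m/(1−x_d))·x_{d−1} = x_d, subject to x_d ∈ (0, 2m/d). Moreover this system is equivalent to the system obtained by replacing its last equation by x_m + x_{m+1} + ⋯ + x_d = 1; in particular ρ_m + ρ_{m+1} + ⋯ + ρ_d = 1. -/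
/-- The system of equations
`1 − (m/(1−x_d))·x_m = x_m`; `(m/(1−x_d))·(x_{k−1} − x_k) = x_k` for `k = m+1, …, d−1`;
`(m/(1−x_d))·x_{d−1} = x_d`. -/
def degreeSystem (m d : ℕ) (x : ℕ → ℝ) : Prop :=
  (1 - ((m : ℝ) / (1 - x d)) * x m = x m) ∧
  (∀ k : ℕ, m + 1 ≤ k → k ≤ d - 1 → ((m : ℝ) / (1 - x d)) * (x (k - 1) - x k) = x k) ∧
  ((m : ℝ) / (1 - x d)) * x (d - 1) = x d

/-- The system obtained from `degreeSystem` by replacing its last equation by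
`x_m + x_{m+1} + ⋯ + x_d = 1`. -/
def degreeSystem' (m d : ℕ) (x : ℕ → ℝ) : Prop :=
  (1 - ((m : ℝ) / (1 - x d)) * x m = x m) ∧
  (∀ k : ℕ, m + 1 ≤ k → k ≤ d - 1 → ((m : ℝ) / (1 - x d)) * (x (k - 1) - x k) = x k) ∧
  (∑ k ∈ Finset.Icc m d, x k = 1)

/-!
For `r = x_d < 1` the first equation says `x_m = (1 - r) / (m + 1 - r)` and the middle ones say
`x_k = q x_{k-1}` with `q = m / (m + 1 - r)`; given these, the last equation says that `r` is a
fixed point of `y ↦ (m / (m + 1 - y)) ^ (d - m)`. That map is convex on `(-∞, m + 1)` and lies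
strictly below the diagonal at `2m/d` (Bernoulli's inequality), so it has at most one fixed point
below `2m/d`. Summing the middle equations telescopes, which turns the last equation into
`x_m + ⋯ + x_d = 1`.
-/

open Set

theorem forall_eq_pow_sub_mul_iff {α : Type*} [Monoid α] {x : ℕ → α} {a q : α} {m n : ℕ}
    (hmn : m ≤ n) :
    (∀ k, m ≤ k → k ≤ n → x k = q ^ (k - m) * a) ↔
      x m = a ∧ ∀ k, m + 1 ≤ k → k ≤ n → x k = q * x (k - 1) := by
  constructor
  · intro h
    refine ⟨by simpa using h m le_rfl hmn, fun k hk hkn => ?_⟩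
    rw [h k (by omega) hkn, h (k - 1) (by omega) (by omega), ← mul_assoc, ← pow_succ',
      show k - 1 - m + 1 = k - m by omega]
  · rintro ⟨h0, hstep⟩ k hk
    induction k, hk using Nat.le_induction with
    | base => simpa using fun _ => h0
    | succ k hk ih =>
      intro hkn
      rw [hstep (k + 1) (by omega) hkn, Nat.add_sub_cancel, ih (by omega), ← mul_assoc,
        ← pow_succ', Nat.sub_add_comm hk]

theorem convexOn_div_sub_pow {M c : ℝ} (hM : 0 ≤ M) (n : ℕ) :
    ConvexOn ℝ (Iio c) fun y => (M / (c - y)) ^ n := by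
  have h := ((convexOn_zpow (-n : ℤ)).comp_affineMap
    (AffineMap.const ℝ ℝ c - AffineMap.id ℝ ℝ)).smul (pow_nonneg hM n)
  have hs : (AffineMap.const ℝ ℝ c - AffineMap.id ℝ ℝ) ⁻¹' Ioi 0 = Iio c := by ext y; simp
  rw [hs] at h
  refine h.congr fun y _ => ?_
  simp [zpow_neg, div_eq_mul_inv, mul_pow]

theorem ConvexOn.eq_of_isFixedPt {s : Set ℝ} {f : ℝ → ℝ} (hf : ConvexOn ℝ s f) {x y u : ℝ}
    (hx : x ∈ s) (hy : y ∈ s) (hu : u ∈ s) (hxu : x < u) (hyu : y < u) (hfu : f u < u)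
    (hfx : Function.IsFixedPt f x) (hfy : Function.IsFixedPt f y) : x = y := by
  -- `f - id` vanishes at two points left of `u`, so by convexity it cannot be negative at `u`.
  have not_two_fixedPts : ∀ {a b}, a ∈ s → a < b → b < u → Function.IsFixedPt f a →
      Function.IsFixedPt f b → False := by
    intro a b ha hab hbu hfa hfb
    have h := (hf.sub (concaveOn_id hf.1)).le_right_of_left_le'' ha hu hab hbu.le
      (by simp [hfa.eq, hfb.eq])
    simp only [Pi.sub_apply, id, hfb.eq, sub_self] at h
    linarith
  rcases lt_trichotomy x y with h | h | h
  · exact (not_two_fixedPts hx h hyu hfx hfy).elim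
  · exact h
  · exact (not_two_fixedPts hy h hxu hfy hfx).elim

theorem sum_Icc_eq_of_mul_sub_eq {x : ℕ → ℝ} {c : ℝ} {m n : ℕ} (hmn : m ≤ n)
    (h : ∀ k, m + 1 ≤ k → k ≤ n → c * (x (k - 1) - x k) = x k) :
    ∑ k ∈ Finset.Icc m n, x k = x m + c * (x m - x n) := by
  induction n, hmn using Nat.le_induction with
  | base => simp
  | succ n hmn ih =>
    have hlast := h (n + 1) (by omega) le_rfl
    rw [Nat.add_sub_cancel] at hlast
    rw [Finset.sum_Icc_succ_top (by omega), ih fun k hk hkn => h k hk (by omega)]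
    linear_combination -hlast

section DegreeSystemAlgebra

variable {M r : ℝ}

theorem one_sub_div_mul_eq_self_iff (hr : 1 - r ≠ 0) (hMr : M + 1 - r ≠ 0) {y : ℝ} :
    1 - M / (1 - r) * y = y ↔ y = (1 - r) / (M + 1 - r) := by
  rw [eq_div_iff hMr]
  constructor <;> intro h
  · field_simp at h; linarith
  · field_simp; linarith

theorem div_mul_sub_eq_iff (hr : 1 - r ≠ 0) (hMr : M + 1 - r ≠ 0) {y z : ℝ} :
    M / (1 - r) * (y - z) = z ↔ z = M / (M + 1 - r) * y := by
  rw [div_mul_eq_mul_div, div_eq_iff hr, div_mul_eq_mul_div, eq_div_iff hMr]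
  constructor <;> intro h <;> linarith

theorem div_mul_pow_mul_div (hr : 1 - r ≠ 0) (hMr : M + 1 - r ≠ 0) (j : ℕ) :
    M / (1 - r) * ((M / (M + 1 - r)) ^ j * ((1 - r) / (M + 1 - r))) =
      (M / (M + 1 - r)) ^ (j + 1) := by
  rw [pow_succ]
  field_simp

theorem mul_pow_div_pow_succ (hMr : M + 1 - r ≠ 0) (j : ℕ) :
    (1 - r) * M ^ j / (M + 1 - r) ^ (j + 1) =
      (M / (M + 1 - r)) ^ j * ((1 - r) / (M + 1 - r)) := by
  rw [div_pow, pow_succ]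
  field_simp

end DegreeSystemAlgebra

theorem pow_div_lt_two_mul_div {m d : ℕ} (hm : 0 < m) (hd : 2 * m < d) :
    ((m : ℝ) / (m + 1 - 2 * m / d)) ^ (d - m) < 2 * m / d := by
  have hM : (0 : ℝ) < m := by exact_mod_cast hm
  have hMD : 2 * (m : ℝ) < d := by exact_mod_cast hd
  have hD : (0 : ℝ) < d := by linarith
  set ε : ℝ := (d - 2 * m) / (m * d)
  have hε : 0 < ε := by positivity
  have hbase : (m : ℝ) / (m + 1 - 2 * m / d) = (1 + ε)⁻¹ := by
    rw [show (m : ℝ) + 1 - 2 * m / d = m * (1 + ε) by simp only [ε]; field_simp; ring,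
      div_mul_cancel_left₀ hM.ne']
  have hn : ((d - m : ℕ) : ℝ) = d - m := by push_cast [Nat.cast_sub (by omega : m ≤ d)]; ring
  -- Bernoulli's inequality, with `(d - 2m)² / d` to spare.
  have hbernoulli : (d : ℝ) / (2 * m) < (1 + ε) ^ (d - m) := by
    refine lt_of_lt_of_le ?_ (one_add_mul_le_pow (by linarith) _)
    rw [hn, div_lt_iff₀ (by positivity)]
    have : 0 < ((d : ℝ) - 2 * m) ^ 2 / d := by positivity
    have e : (1 + ((d : ℝ) - m) * ε) * (2 * m) - d = ((d : ℝ) - 2 * m) ^ 2 / d := by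
      simp only [ε]; field_simp; ring
    linarith
  rw [hbase, inv_pow, inv_lt_comm₀ (by positivity) (by positivity), inv_div]
  exact hbernoulli

theorem two_mul_div_lt_one {m d : ℕ} (hd : 2 * m < d) : 2 * (m : ℝ) / d < 1 := by
  rw [div_lt_one (by exact_mod_cast (by omega : 0 < d))]
  exact_mod_cast hd

theorem eq_of_pow_div_eq_self {m d : ℕ} (hm : 0 < m) (hd : 2 * m < d) {s t : ℝ}
    (hs : s < 2 * m / d) (ht : t < 2 * m / d)
    (hs' : ((m : ℝ) / (m + 1 - s)) ^ (d - m) = s) (ht' : ((m : ℝ) / (m + 1 - t)) ^ (d - m) = t) :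
    s = t := by
  have hu : 2 * (m : ℝ) / d < m + 1 := by
    linarith [two_mul_div_lt_one hd, (Nat.cast_nonneg m : (0 : ℝ) ≤ m)]
  exact (convexOn_div_sub_pow m.cast_nonneg (d - m)).eq_of_isFixedPt (hs.trans hu) (ht.trans hu)
    hu hs ht (pow_div_lt_two_mul_div hm hd) hs' ht'

theorem degreeSystem_iff {m d : ℕ} {x : ℕ → ℝ} (hmd : m < d) (hxd : x d < 1) :
    degreeSystem m d x ↔
      (∀ k, m ≤ k → k ≤ d - 1 →
        x k = ((m : ℝ) / (m + 1 - x d)) ^ (k - m) * ((1 - x d) / (m + 1 - x d))) ∧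
      ((m : ℝ) / (m + 1 - x d)) ^ (d - m) = x d := by
  have hr : 1 - x d ≠ 0 := by linarith
  have hMr : (m : ℝ) + 1 - x d ≠ 0 := by linarith [(Nat.cast_nonneg m : (0 : ℝ) ≤ m)]
  have hmid : (∀ k, m + 1 ≤ k → k ≤ d - 1 → (m : ℝ) / (1 - x d) * (x (k - 1) - x k) = x k) ↔
      ∀ k, m + 1 ≤ k → k ≤ d - 1 → x k = m / (m + 1 - x d) * x (k - 1) :=
    forall₃_congr fun _ _ _ => div_mul_sub_eq_iff hr hMr
  rw [degreeSystem, one_sub_div_mul_eq_self_iff hr hMr, hmid, ← and_assoc,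
    ← forall_eq_pow_sub_mul_iff (by omega)]
  refine and_congr_right fun h => ?_
  rw [h (d - 1) (by omega) le_rfl, div_mul_pow_mul_div hr hMr,
    show d - 1 - m + 1 = d - m by omega]

theorem degreeSystem_iff_degreeSystem' {m d : ℕ} {x : ℕ → ℝ} (hmd : m < d) :
    degreeSystem m d x ↔ degreeSystem' m d x := by
  refine and_congr_right fun hfirst => and_congr_right fun hmid => ?_
  have hsplit := Finset.sum_Icc_succ_top (show m ≤ d - 1 + 1 by omega) x
  rw [Nat.sub_add_cancel (by omega)] at hsplit
  rw [hsplit, sum_Icc_eq_of_mul_sub_eq (by omega) hmid]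
  constructor <;> intro h <;> linarith

/-- The vector `(ρ_m, …, ρ_d)` is the unique solution of the degree system subject to
`x_d ∈ (0, 2m/d)`; moreover that system is equivalent to the one with last equation replaced
by `x_m + ⋯ + x_d = 1`, and in particular `ρ_m + ⋯ + ρ_d = 1`. -/
theorem degreeSystem_unique_solution (m d : ℕ) (hm : 1 ≤ m) (hd : 2 * m < d)
    (ρ : ℕ → ℝ)
    (hρd_mem : ρ d ∈ Set.Ioo (0 : ℝ) (2 * m / d))
    (hρd_root : ((m : ℝ) / ((m : ℝ) + 1 - ρ d)) ^ (d - m) = ρ d)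
    (hρ : ∀ k : ℕ, m ≤ k → k ≤ d - 1 →
      ρ k = (1 - ρ d) * (m : ℝ) ^ (k - m) / ((m : ℝ) + 1 - ρ d) ^ (k - m + 1)) :
    (degreeSystem m d ρ) ∧
    (∀ x : ℕ → ℝ, x d ∈ Set.Ioo (0 : ℝ) (2 * m / d) → degreeSystem m d x →
      ∀ k : ℕ, m ≤ k → k ≤ d → x k = ρ k) ∧
    (∀ x : ℕ → ℝ, x d < 1 → (degreeSystem m d x ↔ degreeSystem' m d x)) ∧
    (∑ k ∈ Finset.Icc m d, ρ k = 1) := by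
  have hu := two_mul_div_lt_one hd
  have hρd : ρ d < 1 := hρd_mem.2.trans hu
  have hρ' : ∀ k, m ≤ k → k ≤ d - 1 →
      ρ k = ((m : ℝ) / (m + 1 - ρ d)) ^ (k - m) * ((1 - ρ d) / (m + 1 - ρ d)) := fun k hk hkd =>
    (hρ k hk hkd).trans (mul_pow_div_pow_succ (by linarith [(Nat.cast_nonneg m : (0 : ℝ) ≤ m)]) _)
  have hsol : degreeSystem m d ρ := (degreeSystem_iff (by omega) hρd).2 ⟨hρ', hρd_root⟩
  refine ⟨hsol, fun x hx hsys k hk hkd => ?_, fun x _ => degreeSystem_iff_degreeSystem' (by omega),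
    ((degreeSystem_iff_degreeSystem' (by omega)).1 hsol).2.2⟩
  obtain ⟨hclosed, hroot⟩ := (degreeSystem_iff (by omega) (hx.2.trans hu)).1 hsys
  have hxρ : x d = ρ d := eq_of_pow_div_eq_self hm hd hx.2 hρd_mem.2 hroot hρd_root
  rcases hkd.eq_or_lt with rfl | hkd
  · exact hxρ
  · rw [hclosed k hk (by omega), hρ' k hk (by omega), hxρ]
end

section
/- Fix integers m ≥ 1 and d > 2m and define F = (f_m, …, f_d) : {x ∈ ℝ^{d−m+1} : x_d < 1} → ℝ^{d−m+1} by f_m(x) = 1 − (m/(1−x_d) + 1)·x_m, f_k(x) = (m/(1−x_d))·x_{k−1} − (m/(1−x_d) + 1)·x_k for k = m+1, …, d−1, and f_d(x) = (m/(1−x_d))·x_{d−1} − x_d. Then for every x = (x_m,…,x_d) with x_d < 1, the characteristic polynomial P(λ) = det(DF(x) − λI) of the Jacobian matrix DF(x) factors as P(λ) = (−1)^{d−m+1}·(1+λ)·Q(1+λ), where, with c = m/(1−x_d), Q(t) = t^{d−m} + Σ_{i=0}^{d−m−1} c^{d−m−i}·t^i·( C(d−m, i) − Σ_{k=m+i}^{d−1}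 C(k−m, i)·x_k/(1−x_d) ). In particular −1 is always an eigenvalue of DF(x), and if moreover x_m, …, x_d ≥ 0 and x_m + ⋯ + x_d ≤ 1, then all coefficients of Q are nonnegative. -/
/-- The map `F = (f_m, …, f_d)` from the degree-evolution dynamics: coordinates are indexed by
`k = m, …, d` (other coordinates are irrelevant). -/
noncomputable def uaF (m d : ℕ) (x : ℕ → ℝ) (k : ℕ) : ℝ :=
  if k = m then 1 - ((m : ℝ) / (1 - x d) + 1) * x m
  else if k = d then ((m : ℝ) / (1 - x d)) * x (d - 1) - x d
  else ((m : ℝ) / (1 - x d)) * x (k - 1) - ((m : ℝ) / (1 - x d) + 1) * x k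

/-- The Jacobian matrix `DF(x)` of `F = (f_m, …, f_d)` at `x`: its `(i,j)` entry is the partial
derivative `∂f_{m+i}/∂x_{m+j}` at `x`. -/
noncomputable def uaJacobian (m d : ℕ) (x : ℕ → ℝ) :
    Matrix (Fin (d - m + 1)) (Fin (d - m + 1)) ℝ :=
  Matrix.of fun i j =>
    deriv (fun t => uaF m d (Function.update x (m + (j : ℕ)) t) (m + (i : ℕ)))
      (x (m + (j : ℕ)))

/-- The polynomial `Q(t)` from the factorization of the characteristic polynomial. -/
noncomputable def uaQ (m d : ℕ) (x : ℕ → ℝ) (t : ℝ) : ℝ :=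
  t ^ (d - m) + ∑ i ∈ Finset.range (d - m),
    ((m : ℝ) / (1 - x d)) ^ (d - m - i) * t ^ i *
      (((d - m).choose i : ℝ) -
        ∑ k ∈ Finset.Icc (m + i) (d - 1), (((k - m).choose i : ℝ)) * x k / (1 - x d))

/-! Write `c = m / (1 - x_d)`, `y_k = x_k / (1 - x_d)` and `N = d - m`. The Jacobian `DF(x)` is
the lower bidiagonal matrix with diagonal `-(c + 1)` and subdiagonal `c`, except for its last column
(the `x_d`-derivatives), whose `i`-th entry is `c (y_{m+i-1} - y_{m+i})` with the out-of-range
terms dropped, minus `1` in the last row. Expanding along the first row, a lower bidiagonal matrix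
with diagonal `a`, subdiagonal `b` and last column `v` has determinant `∑ v_i a^i (-b)^(N-i)`.
For `DF(x) - λ` and `t = 1 + λ`, summation by parts turns this into
`(-1)^(N+1) t ((c + t)^N - ∑_j c^(N-j) (c + t)^j y_{m+j})`, and the binomial theorem turns the
bracket into `Q(t)`. The coefficients of `Q` are nonnegative because `C(k - m, i) ≤ C(d - m, i)`
and `∑_{m ≤ k < d} x_k ≤ 1 - x_d`. -/

open Finset Matrix

section CommRing

variable {R : Type*} [CommRing R]

def lowerBidiagonal (n : ℕ) (a b : R) : Matrix (Fin n) (Fin n) R :=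
  of fun i j => if i = j then a else if (i : ℕ) = j + 1 then b else 0

theorem det_updateCol_last_lowerBidiagonal (n : ℕ) (a b : R) (v : Fin (n + 1) → R) :
    ((lowerBidiagonal (n + 1) a b).updateCol (Fin.last n) v).det =
      ∑ i : Fin (n + 1), v i * a ^ (i : ℕ) * (-b) ^ (n - i) := by
  induction n with
  | zero => simp
  | succ n ih =>
    set A := (lowerBidiagonal (n + 2) a b).updateCol (Fin.last (n + 1)) v
    have hminor : A.submatrix Fin.succ (Fin.succAbove 0) =
        (lowerBidiagonal (n + 1) a b).updateCol (Fin.last n) (v ∘ Fin.succ) := by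
      ext i j
      simp [A, lowerBidiagonal, updateCol_apply, Fin.ext_iff, Fin.succAbove_zero]
    have hcorner : (A.submatrix Fin.succ (Fin.last (n + 1)).succAbove).det = b ^ (n + 1) := by
      rw [det_of_isUpperTriangular]
      · rw [Fintype.prod_congr _ (fun _ => b), prod_const, card_univ, Fintype.card_fin]
        intro i
        simp [A, lowerBidiagonal, Fin.ext_iff, i.isLt.ne]
      · intro i j hij
        rw [id, id, Fin.lt_def] at hij
        simp only [A, lowerBidiagonal, submatrix_apply, updateCol_apply, of_apply, Fin.ext_iff,
          Fin.succAbove_last, Fin.val_castSucc, Fin.val_last, Fin.val_succ]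
        split_ifs <;> first | rfl | omega
    have hrow : ∀ j : Fin (n + 2), j ≠ 0 → j ≠ Fin.last (n + 1) → A 0 j = 0 := by
      intro j h0 hl
      simp only [A, lowerBidiagonal, updateCol_apply, of_apply, if_neg hl, if_neg h0.symm]
      rw [Fin.ne_iff_vne] at h0
      simp
    have hA00 : A 0 0 = a := by simp [A, lowerBidiagonal, Fin.ext_iff]
    have hA0last : A 0 (Fin.last (n + 1)) = v 0 := by simp [A]
    rw [det_succ_row_zero, Fintype.sum_eq_add 0 (Fin.last (n + 1)) (by simp [Fin.ext_iff])
      (fun j hj => by rw [hrow j hj.1 hj.2, mul_zero, zero_mul]), hminor, ih, hcorner,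
      Fin.sum_univ_succ (n := n + 1), add_comm, hA00, hA0last, mul_sum]
    congr 1
    · simp only [Fin.val_zero, Fin.val_last, pow_zero, mul_one, Nat.sub_zero, neg_pow b]
      ring
    · refine sum_congr rfl fun i _ => ?_
      simp only [Fin.val_zero, Fin.val_succ, Function.comp_apply, pow_zero, pow_succ,
        Nat.add_sub_add_right]
      ring

theorem add_pow_sub_sum_eq (N : ℕ) (c t : R) (y : ℕ → R) :
    (c + t) ^ N - ∑ j ∈ range N, c ^ (N - j) * (c + t) ^ j * y j =
      t ^ N + ∑ i ∈ range N, c ^ (N - i) * t ^ i *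
        (N.choose i - ∑ j ∈ Ico i N, (j.choose i : R) * y j) := by
  have hexpand : ∀ j ≤ N, c ^ (N - j) * (c + t) ^ j =
      ∑ i ∈ range (j + 1), c ^ (N - i) * t ^ i * j.choose i := by
    intro j hj
    rw [add_comm c, add_pow, mul_sum]
    refine sum_congr rfl fun i hi => ?_
    rw [show N - i = N - j + (j - i) by grind, pow_add]
    ring
  have hswap : ∑ j ∈ range N, c ^ (N - j) * (c + t) ^ j * y j =
      ∑ i ∈ range N, c ^ (N - i) * t ^ i * ∑ j ∈ Ico i N, (j.choose i : R) * y j := by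
    rw [sum_congr rfl fun j hj => by rw [hexpand j (mem_range.mp hj).le, sum_mul]]
    rw [sum_comm' (t' := range N) (s' := fun i => Ico i N)
      (by intro j i; simp only [mem_range, mem_Ico]; omega)]
    simp only [mul_sum, mul_assoc]
  have hN := hexpand N le_rfl
  rw [Nat.sub_self, pow_zero, one_mul, sum_range_succ] at hN
  rw [hswap, hN]
  simp only [Nat.sub_self, pow_zero, Nat.choose_self, Nat.cast_one, one_mul, mul_one, mul_sub,
    sum_sub_distrib]
  ring

theorem sum_telescope_add_pow_mul_pow (N : ℕ) (c t : R) (y : ℕ → R) :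
    ∑ i ∈ range (N + 1), (c * ((if i = 0 then 0 else y (i - 1)) - (if i = N then 0 else y i)) -
        (if i = N then t else 0)) * ((c + t) ^ i * c ^ (N - i)) =
      -t * ((c + t) ^ N - ∑ j ∈ range N, c ^ (N - j) * (c + t) ^ j * y j) := by
  have hprev :
      ∑ i ∈ range (N + 1), (if i = 0 then 0 else y (i - 1)) * ((c + t) ^ i * c ^ (N - i)) =
      ∑ j ∈ range N, y j * ((c + t) ^ (j + 1) * c ^ (N - (j + 1))) := by
    simp [sum_range_succ']
  have hcur : ∑ i ∈ range (N + 1), (if i = N then 0 else y i) * ((c + t) ^ i * c ^ (N - i)) =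
      ∑ j ∈ range N, y j * ((c + t) ^ j * c ^ (N - j)) := by
    rw [sum_range_succ, if_pos rfl, zero_mul, add_zero]
    exact sum_congr rfl fun j hj => by rw [if_neg (mem_range.mp hj).ne]
  have hlast : ∑ i ∈ range (N + 1), (if i = N then t else 0) * ((c + t) ^ i * c ^ (N - i)) =
      t * (c + t) ^ N := by
    simp
  have htelescope : c * (∑ j ∈ range N, y j * ((c + t) ^ (j + 1) * c ^ (N - (j + 1))) -
      ∑ j ∈ range N, y j * ((c + t) ^ j * c ^ (N - j))) =
        t * ∑ j ∈ range N, c ^ (N - j) * ((c + t) ^ j * y j) := by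
    rw [← sum_sub_distrib, mul_sum, mul_sum]
    refine sum_congr rfl fun j hj => ?_
    rw [show N - j = N - (j + 1) + 1 by grind]
    ring
  simp only [sub_mul, sum_sub_distrib, mul_assoc, ← mul_sum, hprev, hcur, hlast]
  rw [htelescope]
  ring

def uaJacobianForm (N : ℕ) (c : R) (y : ℕ → R) : Matrix (Fin (N + 1)) (Fin (N + 1)) R :=
  (lowerBidiagonal (N + 1) (-(c + 1)) c).updateCol (Fin.last N) fun i =>
    c * ((if (i : ℕ) = 0 then 0 else y (i - 1)) - (if (i : ℕ) = N then 0 else y i)) -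
      if (i : ℕ) = N then 1 else 0

theorem det_uaJacobianForm_sub_smul_one (N : ℕ) (c : R) (y : ℕ → R) (lam : R) :
    (uaJacobianForm N c y - lam • (1 : Matrix (Fin (N + 1)) (Fin (N + 1)) R)).det =
      (-1) ^ (N + 1) * (1 + lam) *
        ((c + (1 + lam)) ^ N - ∑ j ∈ range N, c ^ (N - j) * (c + (1 + lam)) ^ j * y j) := by
  set t := 1 + lam
  set w : ℕ → R := fun i =>
    c * ((if i = 0 then 0 else y (i - 1)) - (if i = N then 0 else y i)) - if i = N then t else 0
  have hform : uaJacobianForm N c y - lam • 1 =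
      (lowerBidiagonal (N + 1) (-(c + t)) c).updateCol (Fin.last N) fun i => w i := by
    ext i j
    simp only [uaJacobianForm, lowerBidiagonal, w, t, Matrix.sub_apply, Matrix.smul_apply,
      one_apply, updateCol_apply, of_apply, Fin.ext_iff, Fin.val_last, smul_eq_mul]
    split_ifs <;> first | omega | ring
  have hsign : ∀ i ∈ range (N + 1),
      w i * (-(c + t)) ^ i * (-c) ^ (N - i) = (-1) ^ N * (w i * ((c + t) ^ i * c ^ (N - i))) := by
    intro i hi
    have hiN : i ≤ N := Nat.lt_succ_iff.mp (mem_range.mp hi)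
    rw [neg_pow, neg_pow c, ← Nat.add_sub_cancel' hiN, pow_add, Nat.add_sub_cancel_left]
    ring
  rw [hform, det_updateCol_last_lowerBidiagonal,
    Fin.sum_univ_eq_sum_range (fun i => w i * (-(c + t)) ^ i * (-c) ^ (N - i)),
    sum_congr rfl hsign, ← mul_sum, sum_telescope_add_pow_mul_pow]
  ring

end CommRing

theorem hasDerivAt_update_apply {𝕜 ι : Type*} [NontriviallyNormedField 𝕜] [DecidableEq ι]
    (x : ι → 𝕜) (p q : ι) :
    HasDerivAt (fun t => Function.update x p t q) (if q = p then 1 else 0) (x p) := by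
  by_cases h : q = p
  · subst h
    simpa using hasDerivAt_id' (x q)
  · simpa [h] using hasDerivAt_const (x p) (x q)

theorem uaJacobian_eq {m d : ℕ} (hmd : m < d) {x : ℕ → ℝ} (hx : x d ≠ 1) :
    uaJacobian m d x =
      uaJacobianForm (d - m) ((m : ℝ) / (1 - x d)) fun j => x (m + j) / (1 - x d) := by
  ext i j
  have hu := hasDerivAt_update_apply x (m + j)
  have hd : HasDerivAt (fun t => (m : ℝ) / (1 - Function.update x (m + j) t d))
      ((m : ℝ) / (1 - x d) ^ 2 * if d = m + j then 1 else 0) (x (m + j)) := by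
    have h := (hasDerivAt_const (x (m + j)) (m : ℝ)).div ((hu d).const_sub 1)
      (by simpa [sub_eq_zero] using hx.symm)
    simp only [Function.update_eq_self] at h
    exact h.congr_deriv (by ring)
  have := i.isLt
  have := j.isLt
  rw [uaJacobian, of_apply]
  unfold uaF
  split_ifs with h1 h2
  · refine (((hd.add_const 1).mul (hu m)).const_sub 1).deriv.trans ?_
    simp only [Function.update_eq_self, uaJacobianForm, updateCol_apply, lowerBidiagonal,
      of_apply, Fin.ext_iff, Fin.val_last, h1]
    split_ifs <;> first | omega | (field_simp; ring)
  · refine ((hd.mul (hu (d - 1))).sub (hu d)).deriv.trans ?_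
    have e : m + ((i : ℕ) - 1) = d - 1 := by omega
    simp only [Function.update_eq_self, uaJacobianForm, updateCol_apply, lowerBidiagonal,
      of_apply, Fin.ext_iff, Fin.val_last, e]
    split_ifs <;> first | omega | (field_simp; ring)
  · refine ((hd.mul (hu (m + i - 1))).sub ((hd.add_const 1).mul (hu (m + i)))).deriv.trans ?_
    have e : m + ((i : ℕ) - 1) = m + i - 1 := by omega
    simp only [Function.update_eq_self, uaJacobianForm, updateCol_apply, lowerBidiagonal,
      of_apply, Fin.ext_iff, Fin.val_last, e]
    split_ifs <;> first | omega | (field_simp; ring)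

theorem uaQ_eq (m d : ℕ) (x : ℕ → ℝ) (t : ℝ) :
    uaQ m d x t = ((m : ℝ) / (1 - x d) + t) ^ (d - m) -
      ∑ j ∈ range (d - m), ((m : ℝ) / (1 - x d)) ^ (d - m - j) *
        ((m : ℝ) / (1 - x d) + t) ^ j * (x (m + j) / (1 - x d)) := by
  rw [add_pow_sub_sum_eq, uaQ]
  congr 1
  refine sum_congr rfl fun i hi => ?_
  congr 2
  refine sum_nbij' (fun k => k - m) (fun j => m + j) ?_ ?_ ?_ ?_ fun k hk => ?_
  iterate 4
    intro k hk
    simp only [mem_range, mem_Icc, mem_Ico] at hi hk ⊢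
    omega
  rw [Nat.add_sub_cancel' (le_of_add_le_left (mem_Icc.mp hk).1), mul_div_assoc]

theorem sum_choose_mul_le {m d : ℕ} (hmd : m < d) {x : ℕ → ℝ}
    (hx0 : ∀ k ∈ Icc m d, 0 ≤ x k) (hsum : ∑ k ∈ Icc m d, x k ≤ 1) (i : ℕ) :
    ∑ k ∈ Icc (m + i) (d - 1), ((k - m).choose i : ℝ) * x k ≤
      (d - m).choose i * (1 - x d) := by
  have hsub : insert d (Icc (m + i) (d - 1)) ⊆ Icc m d := by
    intro k hk
    simp only [mem_insert, mem_Icc] at hk ⊢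
    omega
  have htail : ∑ k ∈ Icc (m + i) (d - 1), x k ≤ 1 - x d := by
    have := (sum_le_sum_of_subset_of_nonneg hsub fun k hk _ => hx0 k hk).trans hsum
    rw [sum_insert (by simp only [mem_Icc]; omega)] at this
    linarith
  calc ∑ k ∈ Icc (m + i) (d - 1), ((k - m).choose i : ℝ) * x k
      ≤ ∑ k ∈ Icc (m + i) (d - 1), ((d - m).choose i : ℝ) * x k := by
        refine sum_le_sum fun k hk =>
          mul_le_mul_of_nonneg_right ?_ (hx0 k (hsub (mem_insert_of_mem hk)))
        have := (mem_Icc.mp hk).2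
        exact_mod_cast Nat.choose_le_choose i (by omega : k - m ≤ d - m)
    _ = (d - m).choose i * ∑ k ∈ Icc (m + i) (d - 1), x k := (mul_sum ..).symm
    _ ≤ (d - m).choose i * (1 - x d) := mul_le_mul_of_nonneg_left htail (Nat.cast_nonneg _)

theorem uaJacobian_charpoly_general (m d : ℕ) (hd : 2 * m < d)
    (x : ℕ → ℝ) (hx : x d < 1) :
    (∀ lam : ℝ,
      (uaJacobian m d x - lam • (1 : Matrix (Fin (d - m + 1)) (Fin (d - m + 1)) ℝ)).det
        = (-1 : ℝ) ^ (d - m + 1) * (1 + lam) * uaQ m d x (1 + lam)) ∧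
    ((-1 : ℝ) ∈ spectrum ℝ (uaJacobian m d x)) ∧
    ((∀ k ∈ Finset.Icc m d, 0 ≤ x k) → (∑ k ∈ Finset.Icc m d, x k) ≤ 1 →
      ∀ i ∈ Finset.range (d - m),
        0 ≤ ((m : ℝ) / (1 - x d)) ^ (d - m - i) *
          (((d - m).choose i : ℝ) -
            ∑ k ∈ Finset.Icc (m + i) (d - 1), (((k - m).choose i : ℝ)) * x k / (1 - x d))) := by
  have hdet : ∀ lam : ℝ,
      (uaJacobian m d x - lam • (1 : Matrix (Fin (d - m + 1)) (Fin (d - m + 1)) ℝ)).det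
        = (-1 : ℝ) ^ (d - m + 1) * (1 + lam) * uaQ m d x (1 + lam) := fun lam => by
    rw [uaJacobian_eq (by omega) hx.ne, det_uaJacobianForm_sub_smul_one, uaQ_eq]
  refine ⟨hdet, ?_, fun hx0 hsum i _ => ?_⟩
  · rw [spectrum.mem_iff, isUnit_iff_isUnit_det, Algebra.algebraMap_eq_smul_one, ← neg_sub,
      det_neg, hdet]
    simp
  · have hpos : 0 < 1 - x d := sub_pos.mpr hx
    refine mul_nonneg (pow_nonneg (div_nonneg m.cast_nonneg hpos.le) _) (sub_nonneg.mpr ?_)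
    rw [← sum_div, div_le_iff₀ hpos]
    exact sum_choose_mul_le (by omega) hx0 hsum i

/-- The characteristic polynomial `P(λ) = det(DF(x) − λI)` factors as
`P(λ) = (−1)^{d−m+1}·(1+λ)·Q(1+λ)`; in particular `−1` is an eigenvalue of `DF(x)`, and if
`x_m, …, x_d ≥ 0` with `x_m + ⋯ + x_d ≤ 1` then all coefficients of `Q` are nonnegative. -/
theorem uaJacobian_charpoly (m d : ℕ) (hm : 1 ≤ m) (hd : 2 * m < d)
    (x : ℕ → ℝ) (hx : x d < 1) :
    (∀ lam : ℝ,
      (uaJacobian m d x - lam • (1 : Matrix (Fin (d - m + 1)) (Fin (d - m + 1)) ℝ)).det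
        = (-1 : ℝ) ^ (d - m + 1) * (1 + lam) * uaQ m d x (1 + lam)) ∧
    ((-1 : ℝ) ∈ spectrum ℝ (uaJacobian m d x)) ∧
    ((∀ k ∈ Finset.Icc m d, 0 ≤ x k) → (∑ k ∈ Finset.Icc m d, x k) ≤ 1 →
      ∀ i ∈ Finset.range (d - m),
        0 ≤ ((m : ℝ) / (1 - x d)) ^ (d - m - i) *
          (((d - m).choose i : ℝ) -
            ∑ k ∈ Finset.Icc (m + i) (d - 1), (((k - m).choose i : ℝ)) * x k / (1 - x d))) :=
  uaJacobian_charpoly_general m d hd x hx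
end
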